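/- arXiv:1608.03137 — 7 statements merged into one kernel-verified Lean document; each statement's English description precedes it below -/
import Mathlib

section
/- Let p be a prime, G a profinite group, and H an open normal subgroup of G such that: (a) for every h ∈ H and every open subgroup U of H there exists n ≥ 0 with h^(p^n) ∈ U; and (b) for all g, h ∈ H and all n ≥ 0, g^(p^n) = h^(p^n) implies g = h. Then every element x ∈ G whose centralizer C_G(x) is open in G commutes with every element of H. In particular, if H = G, then the FC-centre Δ(G) equals the centre Z(G). -/
/-!
If `C_G(x)` is open, then by (a) some power `h ^ p ^ n` of `h ∈ H` lies in it. Conjugation by `x`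
maps `H` to itself and fixes `h ^ p ^ n`, so `x h x⁻¹` and `h` are `p ^ n`-th roots of the same
element of `H`, and (b) forces `x h x⁻¹ = h`.
-/

namespace Subgroup

variable {G : Type*} [Group G]

theorem commute_of_commute_pow {H : Subgroup G} [H.Normal] {k : ℕ}
    (hroot : Function.Injective fun a : H => a ^ k) {x h : G} (hh : h ∈ H)
    (hc : Commute x (h ^ k)) : Commute x h := by
  have hconj : x * h * x⁻¹ = h := by
    have hpow : (⟨x * h * x⁻¹, Normal.conj_mem ‹_› h hh x⟩ : H) ^ k = ⟨h, hh⟩ ^ k := by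
      ext
      simp only [SubgroupClass.coe_pow, conj_pow, hc.eq, mul_inv_cancel_right]
    exact congrArg Subtype.val (hroot hpow)
  exact mul_inv_eq_iff_eq_mul.mp hconj

theorem exists_pow_pow_mem_of_isOpen [TopologicalSpace G] {p : ℕ} {H : Subgroup G}
    (ha : ∀ h : H, ∀ U : Subgroup H, IsOpen (U : Set H) → ∃ n : ℕ, h ^ p ^ n ∈ U)
    {K : Subgroup G} (hK : IsOpen (K : Set G)) {h : G} (hh : h ∈ H) :
    ∃ n : ℕ, h ^ p ^ n ∈ K :=
  ha ⟨h, hh⟩ (K.comap H.subtype) (hK.preimage continuous_subtype_val)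

end Subgroup

theorem fc_centre_eq_centre_general {p : ℕ} {G : Type*} [Group G]
    [TopologicalSpace G]
    (H : Subgroup G) [H.Normal]
    (ha : ∀ h : H, ∀ U : Subgroup H, IsOpen (U : Set H) → ∃ n : ℕ, h ^ p ^ n ∈ U)
    (hb : ∀ g h : H, ∀ n : ℕ, g ^ p ^ n = h ^ p ^ n → g = h) :
    (∀ x : G, IsOpen ((Subgroup.centralizer {x} : Subgroup G) : Set G) →
      ∀ h ∈ H, Commute x h) ∧
    (H = ⊤ →
      {x : G | IsOpen ((Subgroup.centralizer {x} : Subgroup G) : Set G)} =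
        (Subgroup.center G : Set G)) := by
  have hcomm : ∀ x : G, IsOpen ((Subgroup.centralizer {x} : Subgroup G) : Set G) →
      ∀ h ∈ H, Commute x h := by
    intro x hx h hh
    obtain ⟨n, hn⟩ := Subgroup.exists_pow_pow_mem_of_isOpen ha hx hh
    exact Subgroup.commute_of_commute_pow (fun a b => hb a b n) hh
      (Subgroup.mem_centralizer_singleton_iff.mp hn).symm
  refine ⟨hcomm, fun hH => Set.ext fun x => ⟨fun hx => ?_, fun hx => ?_⟩⟩
  · exact Subgroup.mem_center_iff.mpr fun g => (hcomm x hx g (hH ▸ Subgroup.mem_top g)).symm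
  · have htop : Subgroup.centralizer {x} = ⊤ :=
      Subgroup.centralizer_eq_top_iff_subset.mpr (Set.singleton_subset_iff.mpr hx)
    simp only [Set.mem_ofPred_eq, htop, Subgroup.coe_top, isOpen_univ]

/-- Let `G` be a profinite group and `H` an open normal subgroup such that
(a) every element of `H` has `p`-power torsion modulo every open subgroup of `H`, and
(b) `H` has unique `p`-power roots. Then every element of `G` with open centralizer
commutes with every element of `H`; in particular if `H = G` then the FC-centre of `G`
equals the centre of `G`. -/
theorem fc_centre_eq_centre {p : ℕ} (hp : p.Prime) {G : Type*} [Group G]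
    [TopologicalSpace G] [IsTopologicalGroup G] [CompactSpace G] [T2Space G]
    [TotallyDisconnectedSpace G]
    (H : Subgroup G) [H.Normal] (hHopen : IsOpen (H : Set G))
    (ha : ∀ h : H, ∀ U : Subgroup H, IsOpen (U : Set H) → ∃ n : ℕ, h ^ p ^ n ∈ U)
    (hb : ∀ g h : H, ∀ n : ℕ, g ^ p ^ n = h ^ p ^ n → g = h) :
    (∀ x : G, IsOpen ((Subgroup.centralizer {x} : Subgroup G) : Set G) →
      ∀ h ∈ H, Commute x h) ∧
    (H = ⊤ →
      {x : G | IsOpen ((Subgroup.centralizer {x} : Subgroup G) : Set G)} =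
        (Subgroup.center G : Set G)) :=
  fc_centre_eq_centre_general H ha hb
end

section
/- Let G be a profinite group, N a closed normal subgroup of G, and H a closed subgroup of G containing N. Then the image H/N is an orbital closed subgroup of the quotient topological group G/N if and only if H is an orbital closed subgroup of G; and H/N is an isolated orbital closed subgroup of G/N if and only if H is an isolated orbital closed subgroup of G. -/
/-- A closed subgroup `H` of a topological group `G` is *orbital* if it is closed and
its normalizer is open in `G`. -/
def IsOrbital {G : Type*} [Group G] [TopologicalSpace G] (H : Subgroup G) : Prop :=
  IsClosed (H : Set G) ∧ IsOpen (Subgroup.normalizer (H : Set G) : Set G)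

/-- An orbital closed subgroup `H` is *isolated orbital* if every orbital closed subgroup
properly containing `H` contains it with infinite index. -/
def IsIsolatedOrbital {G : Type*} [Group G] [TopologicalSpace G] (H : Subgroup G) : Prop :=
  IsOrbital H ∧ ∀ H' : Subgroup G, IsOrbital H' → H < H' → H.relIndex H' = 0

/-- `G` satisfies the maximum condition on closed subgroups. -/
def MaxClosedSubgroups (G : Type*) [Group G] [TopologicalSpace G] : Prop :=
  ∀ S : Set (Subgroup G), S.Nonempty → (∀ H ∈ S, IsClosed (H : Set G)) →
    ∃ M ∈ S, ∀ K ∈ S, M ≤ K → K = M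

/-- A topological group is *orbitally sound* if every isolated orbital closed subgroup
is normal. -/
def OrbitallySound (G : Type*) [Group G] [TopologicalSpace G] : Prop :=
  ∀ H : Subgroup G, IsIsolatedOrbital H → H.Normal

/-- The *isolator* of an orbital closed subgroup `H`: the closed subgroup topologically
generated by all orbital closed subgroups `L` containing `H` with finite index. -/
def isolator {G : Type*} [Group G] [TopologicalSpace G] [IsTopologicalGroup G]
    (H : Subgroup G) : Subgroup G :=
  (⨆ L ∈ {L : Subgroup G | IsOrbital L ∧ H ≤ L ∧ H.relIndex L ≠ 0}, L).topologicalClosure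

/-- The Roseblade subgroup `nio(G)`: the intersection of the normalizers of all isolated
orbital closed subgroups of `G`. -/
def nio (G : Type*) [Group G] [TopologicalSpace G] : Subgroup G :=
  ⨅ H ∈ {H : Subgroup G | IsIsolatedOrbital H}, Subgroup.normalizer (H : Set G)

open Topology

/-!
A homomorphism `f : G →* Q` that is a quotient map identifies the subgroups of `Q` with the
subgroups of `G` containing `ker f` via `K ↦ K.comap f`. This correspondence preserves and
reflects closedness, openness of normalizers (`comap` commutes with the normalizer since `f` is
surjective), strict inclusions and relative indices, hence orbitality and isolated orbitality.
Apply this to `G →* G ⧸ N`.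
-/

namespace Subgroup

variable {G Q : Type*} [Group G] [Group Q] {f : G →* Q}

theorem relIndex_comap_comap_of_surjective (hf : Function.Surjective f) (K L : Subgroup Q) :
    (K.comap f).relIndex (L.comap f) = K.relIndex L := by
  rw [relIndex_comap, map_comap_eq_self_of_surjective hf]

variable [TopologicalSpace G] [TopologicalSpace Q]

theorem isOrbital_comap_iff (hf : IsQuotientMap f) (K : Subgroup Q) :
    IsOrbital (K.comap f) ↔ IsOrbital K := by
  have hnorm : (normalizer (K.comap f : Set G) : Set G) = f ⁻¹' (normalizer (K : Set Q)) := by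
    rw [← comap_normalizer_eq_of_surjective K hf.surjective, coe_comap]
  rw [IsOrbital, IsOrbital, hnorm, coe_comap, hf.isClosed_preimage, hf.isOpen_preimage]

theorem isIsolatedOrbital_comap_iff (hf : IsQuotientMap f) (K : Subgroup Q) :
    IsIsolatedOrbital (K.comap f) ↔ IsIsolatedOrbital K := by
  rw [IsIsolatedOrbital, IsIsolatedOrbital, isOrbital_comap_iff hf]
  refine and_congr_right fun _ => ⟨fun hG L hL hKL => ?_, fun hQ L hL hKL => ?_⟩
  · rw [← relIndex_comap_comap_of_surjective hf.surjective]
    exact hG _ ((isOrbital_comap_iff hf L).2 hL)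
      ((comap_lt_comap_of_surjective hf.surjective).2 hKL)
  · have hker : f.ker ≤ L := (ker_le_comap f K).trans hKL.le
    rw [← comap_map_eq_self hker] at hL hKL ⊢
    rw [relIndex_comap_comap_of_surjective hf.surjective]
    exact hQ _ ((isOrbital_comap_iff hf _).1 hL)
      ((comap_lt_comap_of_surjective hf.surjective).1 hKL)

end Subgroup

theorem orbital_quotient_iff_general {G : Type*} [Group G] [TopologicalSpace G]
    (N : Subgroup G) [N.Normal]
    (H : Subgroup G) (hNH : N ≤ H) :
    (IsOrbital (H.map (QuotientGroup.mk' N)) ↔ IsOrbital H) ∧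
    (IsIsolatedOrbital (H.map (QuotientGroup.mk' N)) ↔ IsIsolatedOrbital H) := by
  have hH : (H.map (QuotientGroup.mk' N)).comap (QuotientGroup.mk' N) = H :=
    Subgroup.comap_map_eq_self (by rwa [QuotientGroup.ker_mk'])
  have hq : IsQuotientMap (QuotientGroup.mk' N) := isQuotientMap_quotient_mk'
  rw [← Subgroup.isOrbital_comap_iff hq, ← Subgroup.isIsolatedOrbital_comap_iff hq, hH]
  exact ⟨Iff.rfl, Iff.rfl⟩

/-- Let `G` be a profinite group, `N` a closed normal subgroup and `H` a closed subgroup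
containing `N`. Then `H/N` is orbital in `G/N` iff `H` is orbital in `G`, and `H/N` is
isolated orbital in `G/N` iff `H` is isolated orbital in `G`. -/
theorem orbital_quotient_iff {G : Type*} [Group G] [TopologicalSpace G]
    [IsTopologicalGroup G] [CompactSpace G] [T2Space G] [TotallyDisconnectedSpace G]
    (N : Subgroup G) [N.Normal] (hNcl : IsClosed (N : Set G))
    (H : Subgroup G) (hHcl : IsClosed (H : Set G)) (hNH : N ≤ H) :
    (IsOrbital (H.map (QuotientGroup.mk' N)) ↔ IsOrbital H) ∧
    (IsIsolatedOrbital (H.map (QuotientGroup.mk' N)) ↔ IsIsolatedOrbital H) :=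
  orbital_quotient_iff_general N H hNH
end

section
/- Let G be a profinite group that is orbitally sound, and let N be a closed normal subgroup of G. Then the quotient topological group G/N is orbitally sound, i.e., every isolated orbital closed subgroup of G/N is normal in G/N. -/
/-!
Pulling back along `π : G → G ⧸ N` turns an isolated orbital subgroup `K` of the quotient into
an isolated orbital subgroup `π⁻¹ K` of `G`: any orbital `H' ⊋ π⁻¹ K` contains `ker π`, so it is
recovered from its image `π H'`, which is orbital (closed since `π` is a quotient map, with open
normalizer since `π` is open) and properly contains `K`; and `[H' : π⁻¹ K] = [π H' : K]`. Hence
`π⁻¹ K` is normal, and so is its image `K`.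
-/

section

variable {G Q : Type*} [Group G] [Group Q] [TopologicalSpace G] [TopologicalSpace Q]
  {f : G →* Q}

theorem IsOrbital.comap {K : Subgroup Q} (hK : IsOrbital K) (hf : Continuous f)
    (hf_surj : Function.Surjective f) : IsOrbital (K.comap f) := by
  refine ⟨hK.1.preimage hf, ?_⟩
  rw [← Subgroup.comap_normalizer_eq_of_surjective K hf_surj]
  exact hK.2.preimage hf

variable [SeparatelyContinuousMul Q]

theorem IsOrbital.map {H : Subgroup G} (hH : IsOrbital H) (hf : IsOpenQuotientMap f)
    (hker : f.ker ≤ H) : IsOrbital (H.map f) := by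
  refine ⟨?_, ?_⟩
  · rw [← hf.isQuotientMap.isClosed_preimage, ← Subgroup.coe_comap,
      Subgroup.comap_map_eq_self hker]
    exact hH.1
  · exact Subgroup.isOpen_mono (Subgroup.le_normalizer_map f) (hf.isOpenMap _ hH.2)

theorem IsIsolatedOrbital.comap {K : Subgroup Q} (hK : IsIsolatedOrbital K)
    (hf : IsOpenQuotientMap f) : IsIsolatedOrbital (K.comap f) := by
  refine ⟨hK.1.comap hf.continuous hf.surjective, fun H' hH' hlt => ?_⟩
  have hker : f.ker ≤ H' := (Subgroup.ker_le_comap f K).trans hlt.le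
  have hK_lt : K < H'.map f := by
    rw [← Subgroup.comap_lt_comap_of_surjective hf.surjective,
      Subgroup.comap_map_eq_self hker]
    exact hlt
  rw [Subgroup.relIndex_comap]
  exact hK.2 _ (hH'.map hf hker) hK_lt

theorem OrbitallySound.of_isOpenQuotientMap (hG : OrbitallySound G)
    (hf : IsOpenQuotientMap f) : OrbitallySound Q := fun K hK => by
  rw [← Subgroup.map_comap_eq_self_of_surjective hf.surjective K]
  exact (hG _ (hK.comap hf)).map f hf.surjective

end

theorem orbitallySound_quotient_general {G : Type*} [Group G] [TopologicalSpace G]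
    [IsTopologicalGroup G]
    (hG : OrbitallySound G)
    (N : Subgroup G) [N.Normal] :
    OrbitallySound (G ⧸ N) :=
  hG.of_isOpenQuotientMap (f := QuotientGroup.mk' N) QuotientGroup.isOpenQuotientMap_mk

/-- If a profinite group `G` is orbitally sound and `N` is a closed normal subgroup,
then the quotient `G/N` is orbitally sound. -/
theorem orbitallySound_quotient {G : Type*} [Group G] [TopologicalSpace G]
    [IsTopologicalGroup G] [CompactSpace G] [T2Space G] [TotallyDisconnectedSpace G]
    (hG : OrbitallySound G)
    (N : Subgroup G) [N.Normal] (hNcl : IsClosed (N : Set G)) :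
    OrbitallySound (G ⧸ N) :=
  orbitallySound_quotient_general hG N
end

section
/- Let G be a profinite group satisfying the maximum condition on closed subgroups, and let H be an orbital closed subgroup of G. Then H has finite index in its isolator i_G(H); equivalently, H is an open subgroup of i_G(H). -/
/-!
Let `C` be the commensurator of `H` and `K` the intersection of the `C`-conjugates of `H`.
Since `H` has only finitely many conjugates, `[H : K]` is finite; so `C` is also the
commensurator of `K`, and `K` is normal in `C`. Every subgroup `W ⊇ K` with `[W : K]` finite
has its normalizer inside `C`, hence lies in `C`. If moreover `W` has finitely many conjugates,
then `W / K` is a finite subgroup of `C / K` whose elements have finitely many conjugates, so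
by Dietzmann's lemma any two such `W` lie in a third one. The maximum condition thus yields a
largest such `W`; it is closed, contains every orbital `L ⊇ H` with `[L : H]` finite and hence
the isolator, and contains `H` with finite index.
-/

open Subgroup ConjAct
open scoped Pointwise

namespace Subgroup

variable {G : Type*} [Group G]

section Dietzmann

theorem finiteIndex_centralizer_singleton {x : G} (hx : (conjugatesOf x).Finite) :
    (centralizer {x}).FiniteIndex := by
  have horbit : MulAction.orbit (ConjAct G) x = conjugatesOf x := by
    ext y
    exact mem_orbit_conjAct.trans isConj_comm
  have hindex : (centralizer {x}).index = (conjugatesOf x).ncard :=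
    (congrArg index (centralizer_eq_comap_stabilizer x)).trans <|
      (index_comap_of_surjective (G := ConjAct G) _ toConjAct.surjective).trans <|
      (MulAction.index_stabilizer _ x).trans (congrArg Set.ncard horbit)
  exact ⟨hindex ▸ ((Set.ncard_pos hx).mpr ⟨x, IsConj.refl x⟩).ne'⟩

theorem finiteIndex_centralizer {X : Set G} (hX : X.Finite)
    (hconj : ∀ x ∈ X, (conjugatesOf x).Finite) : (centralizer X).FiniteIndex := by
  have : Finite X := hX.to_subtype
  have : (⨅ x : X, centralizer {(x : G)}).FiniteIndex :=
    finiteIndex_iInf fun x => finiteIndex_centralizer_singleton (hconj x x.2)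
  refine finiteIndex_of_le (H := ⨅ x : X, centralizer {(x : G)}) fun g hg y hy => ?_
  exact (mem_centralizer_singleton_iff.mp (mem_iInf.mp hg ⟨y, hy⟩)).symm

open scoped IsMulCommutative in
/-- The transfer `g ↦ g ^ [D : Z(D)]` into the centre sends the torsion generators to torsion
elements, so the centre is a finitely generated torsion abelian group. -/
theorem _root_.Group.finite_of_finiteIndex_center {D : Type*} [Group D]
    [(center D).FiniteIndex] {X : Set D} (hX : X.Finite) (hgen : closure X = ⊤)
    (htors : ∀ x ∈ X, IsOfFinOrder x) : Finite D := by
  have : Group.FG D := Group.fg_iff.mpr ⟨X, hgen, hX⟩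
  set ψ := MonoidHom.transferCenterPow D
  have hψ : ψ.range ≤ CommGroup.torsion (center D) := by
    rw [MonoidHom.range_eq_map, ← hgen, MonoidHom.map_closure, closure_le]
    rintro _ ⟨x, hx, rfl⟩
    exact ψ.isOfFinOrder (htors x hx)
  have htorsion : IsMulTorsion (center D) := fun z => by
    have hz : ψ z = z ^ (center D).index := Subtype.ext (MonoidHom.transferCenterPow_apply _)
    exact (hz ▸ hψ ⟨z, rfl⟩ : IsOfFinOrder (z ^ (center D).index)).of_pow
      FiniteIndex.index_ne_zero
  have : Finite (center D) := CommGroup.finite_of_fg_isMulTorsion _ htorsion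
  exact (finite_iff_finite_and_finiteIndex _).mpr ⟨this, inferInstance⟩

/-- Dietzmann's lemma. -/
theorem finite_closure_of_finite_conjugates {X : Set G} (hX : X.Finite)
    (htors : ∀ x ∈ X, IsOfFinOrder x) (hconj : ∀ x ∈ X, (conjugatesOf x).Finite) :
    Finite (closure X) := by
  have : (centralizer X).FiniteIndex := finiteIndex_centralizer hX hconj
  have : (center (closure X)).FiniteIndex := by
    refine finiteIndex_of_le (H := (centralizer X).subgroupOf (closure X)) fun z hz => ?_
    have hz' : (z : G) ∈ centralizer (closure X : Set G) := by
      rwa [centralizer_closure]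
    exact mem_center_iff.mpr fun y => Subtype.ext (hz' y y.2)
  exact Group.finite_of_finiteIndex_center (hX.preimage Subtype.val_injective.injOn)
    closure_closure_coe_preimage fun x hx =>
      (closure X).subtype_injective.isOfFinOrder_iff.mp (htors x hx)

theorem finite_normalClosure {X : Set G} (hX : X.Finite)
    (htors : ∀ x ∈ X, IsOfFinOrder x) (hconj : ∀ x ∈ X, (conjugatesOf x).Finite) :
    Finite (normalClosure X) := by
  refine finite_closure_of_finite_conjugates (hX.biUnion hconj) (fun y hy => ?_)
    fun y hy => ?_ <;>
    obtain ⟨x, hx, hxy⟩ := Group.mem_conjugatesOfSet_iff.mp hy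
  · exact hxy.isOfFinOrder (htors x hx)
  · exact hxy.conjugatesOf_eq ▸ hconj x hx

end Dietzmann

section Commensurator

theorem normalizer_le_commensurator {K W : Subgroup G} (hKW : K ≤ W) (h : K.relIndex W ≠ 0) :
    normalizer (W : Set G) ≤ Commensurable.commensurator K := by
  intro g hg
  have hgW : toConjAct g • W = W := conjAct_pointwise_smul_eq_self hg
  have hgK : toConjAct g • K ≤ W := hgW ▸ pointwise_smul_le_pointwise_smul_iff.mpr hKW
  have hrel : (toConjAct g • K).relIndex W ≠ 0 := by
    rwa [← hgW, relIndex_pointwise_smul]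
  exact ⟨fun h0 => hrel (relIndex_eq_zero_of_le_right hKW h0),
    fun h0 => h (relIndex_eq_zero_of_le_right hgK h0)⟩

theorem finite_range_conjAct_smul (H : Subgroup G) [(normalizer (H : Set G)).FiniteIndex] :
    (Set.range fun g : G => toConjAct g • H).Finite := by
  let conj : G ⧸ normalizer (H : Set G) → Subgroup G :=
    Quotient.lift (fun g : G => toConjAct g • H) fun a b hab => by
      rw [← mul_inv_cancel_left a b, map_mul, mul_smul,
        conjAct_pointwise_smul_eq_self (QuotientGroup.leftRel_apply.mp hab)]
  exact (Set.finite_range conj).subset fun _ ⟨g, hg⟩ => ⟨g, hg⟩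

def normalCoreIn (C H : Subgroup G) : Subgroup G :=
  ⨅ c : C, toConjAct (c : G) • H

theorem mem_normalCoreIn {C H : Subgroup G} {x : G} :
    x ∈ normalCoreIn C H ↔ ∀ c ∈ C, c⁻¹ * x * c ∈ H := by
  simp only [normalCoreIn, mem_iInf, mem_pointwise_smul_iff_inv_smul_mem, ← toConjAct_inv,
    toConjAct_smul, inv_inv, Subtype.forall]

theorem normalCoreIn_le {C H : Subgroup G} : normalCoreIn C H ≤ H := fun x hx => by
  simpa using mem_normalCoreIn.mp hx 1 C.one_mem

theorem le_normalizer_normalCoreIn (C H : Subgroup G) :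
    C ≤ normalizer (normalCoreIn C H : Set G) := by
  intro c hc x
  simp only [SetLike.mem_coe, mem_normalCoreIn]
  refine ⟨fun hx d hd => ?_, fun hx d hd => ?_⟩
  · simpa [mul_assoc] using hx (c⁻¹ * d) (C.mul_mem (C.inv_mem hc) hd)
  · simpa [mul_assoc] using hx (c * d) (C.mul_mem hc hd)

theorem relIndex_normalCoreIn_ne_zero {C H : Subgroup G} [(normalizer (H : Set G)).FiniteIndex]
    (hC : C ≤ Commensurable.commensurator H) : (normalCoreIn C H).relIndex H ≠ 0 := by
  set T := Set.range fun c : C => toConjAct (c : G) • H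
  have : Finite T := by
    refine ((finite_range_conjAct_smul H).subset ?_).to_subtype
    rintro _ ⟨c, rfl⟩
    exact ⟨c, rfl⟩
  have hT : (⨅ K : T, (K : Subgroup G)).relIndex H ≠ 0 := by
    refine relIndex_iInf_ne_zero ?_
    rintro ⟨_, c, rfl⟩
    exact (hC c.2).1
  refine fun h0 => hT (relIndex_eq_zero_of_le_left ?_ h0)
  exact le_iInf fun c => iInf_le_of_le ⟨_, c, rfl⟩ le_rfl

end Commensurator

section FinConjOvergroups

def finConjOvergroups (K : Subgroup G) : Set (Subgroup G) :=
  {W | K ≤ W ∧ K.relIndex W ≠ 0 ∧ (normalizer (W : Set G)).FiniteIndex}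

section Quotient

variable {K : Subgroup G} [K.Normal]

theorem card_map_mk' (W : Subgroup G) :
    Nat.card (W.map (QuotientGroup.mk' K)) = K.relIndex W := by
  rw [← relIndex_ker, QuotientGroup.ker_mk']

theorem finite_conjugatesOf_of_mem_map {W : Subgroup G} (hW : W ∈ finConjOvergroups K)
    {x : G ⧸ K} (hx : x ∈ W.map (QuotientGroup.mk' K)) : (conjugatesOf x).Finite := by
  have : (normalizer (W : Set G)).FiniteIndex := hW.2.2
  have hfin : ∀ U ∈ Set.range fun g : G => toConjAct g • W,
      ((U.map (QuotientGroup.mk' K) : Subgroup (G ⧸ K)) : Set (G ⧸ K)).Finite := by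
    rintro _ ⟨g, rfl⟩
    have hgK : toConjAct g • K = K :=
      conjAct_pointwise_smul_eq_self (normalizer_eq_top_iff.mpr ‹_› ▸ mem_top g)
    have : Finite ((toConjAct g • W).map (QuotientGroup.mk' K)) := by
      refine Nat.finite_of_card_ne_zero ?_
      rw [card_map_mk', ← hgK, relIndex_pointwise_smul]
      exact hW.2.1
    exact Set.toFinite _
  refine ((finite_range_conjAct_smul W).biUnion hfin).subset ?_
  rintro y hy
  obtain ⟨q, rfl⟩ := isConj_iff.mp hy
  obtain ⟨g, rfl⟩ := QuotientGroup.mk'_surjective K q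
  obtain ⟨w, hw, rfl⟩ := mem_map.mp hx
  refine Set.mem_biUnion ⟨g, rfl⟩ ⟨g * w * g⁻¹, ?_, by simp⟩
  rw [← toConjAct_smul]
  exact smul_mem_pointwise_smul _ _ _ hw

theorem exists_normal_ge_of_mem_finConjOvergroups {V₁ V₂ : Subgroup G}
    (h₁ : V₁ ∈ finConjOvergroups K) (h₂ : V₂ ∈ finConjOvergroups K) :
    ∃ W : Subgroup G, W.Normal ∧ V₁ ≤ W ∧ V₂ ≤ W ∧ K.relIndex W ≠ 0 := by
  set φ := QuotientGroup.mk' K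
  have hfinite {V : Subgroup G} (hV : V ∈ finConjOvergroups K) : Finite (V.map φ) :=
    Nat.finite_of_card_ne_zero (by rw [card_map_mk']; exact hV.2.1)
  have := hfinite h₁
  have := hfinite h₂
  set X : Set (G ⧸ K) := (V₁.map φ : Set (G ⧸ K)) ∪ V₂.map φ
  have htors : ∀ x ∈ X, IsOfFinOrder x := by
    rintro x (hx | hx)
    · exact (V₁.map φ).subtype.isOfFinOrder (isOfFinOrder_of_finite ⟨x, hx⟩)
    · exact (V₂.map φ).subtype.isOfFinOrder (isOfFinOrder_of_finite ⟨x, hx⟩)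
  have hconj : ∀ x ∈ X, (conjugatesOf x).Finite := by
    rintro x (hx | hx)
    exacts [finite_conjugatesOf_of_mem_map h₁ hx, finite_conjugatesOf_of_mem_map h₂ hx]
  have := finite_normalClosure ((Set.toFinite _).union (Set.toFinite _)) htors hconj
  refine ⟨(normalClosure X).comap φ, inferInstance, ?_, ?_, ?_⟩
  · exact map_le_iff_le_comap.mp fun x hx => subset_normalClosure (Or.inl hx)
  · exact map_le_iff_le_comap.mp fun x hx => subset_normalClosure (Or.inr hx)
  · rw [← card_map_mk', map_comap_eq_self_of_surjective (QuotientGroup.mk'_surjective K)]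
    exact Nat.card_pos.ne'

end Quotient

theorem subgroupOf_mem_finConjOvergroups {K W N : Subgroup G} (hWN : W ≤ N)
    (hW : W ∈ finConjOvergroups K) : W.subgroupOf N ∈ finConjOvergroups (K.subgroupOf N) := by
  obtain ⟨hKW, hrel, hnorm⟩ := hW
  refine ⟨fun x hx => hKW hx, relIndex_subgroupOf hWN ▸ hrel, ?_⟩
  exact subgroupOf_normalizer_eq hWN ▸ inferInstance

theorem directedOn_finConjOvergroups {K : Subgroup G}
    (hK : Commensurable.commensurator K ≤ normalizer (K : Set G)) :
    DirectedOn (· ≤ ·) (finConjOvergroups K) := by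
  intro W₁ h₁ W₂ h₂
  set N := normalizer (K : Set G)
  have hle : ∀ W ∈ finConjOvergroups K, normalizer (W : Set G) ≤ N := fun W hW =>
    (normalizer_le_commensurator hW.1 hW.2.1).trans hK
  have hW₁N : W₁ ≤ N := le_normalizer.trans (hle W₁ h₁)
  have hW₂N : W₂ ≤ N := le_normalizer.trans (hle W₂ h₂)
  obtain ⟨W', hW'n, h₁', h₂', hrel⟩ := exists_normal_ge_of_mem_finConjOvergroups
    (subgroupOf_mem_finConjOvergroups hW₁N h₁) (subgroupOf_mem_finConjOvergroups hW₂N h₂)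
  set W := W'.map N.subtype
  have hWN : W ≤ N := map_subtype_le W'
  have hW : W.subgroupOf N = W' := comap_map_eq_self_of_injective N.subtype_injective W'
  have hle₁ : W₁ ≤ W := fun x hx => ⟨⟨x, hW₁N hx⟩, h₁' hx, rfl⟩
  have hle₂ : W₂ ≤ W := fun x hx => ⟨⟨x, hW₂N hx⟩, h₂' hx, rfl⟩
  have hNW : N ≤ normalizer (W : Set G) :=
    (normal_subgroupOf_iff_le_normalizer hWN).mp (hW ▸ hW'n)
  have := h₁.2.2
  refine ⟨W, ⟨h₁.1.trans hle₁, ?_, finiteIndex_of_le ((hle W₁ h₁).trans hNW)⟩, hle₁, hle₂⟩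
  rw [← relIndex_subgroupOf hWN, hW]
  exact hrel

end FinConjOvergroups

section Topology

variable [TopologicalSpace G] [IsTopologicalGroup G]

theorem isClosed_of_relIndex_ne_zero {K W : Subgroup G} (hK : IsClosed (K : Set G))
    (hKW : K ≤ W) (h : K.relIndex W ≠ 0) : IsClosed (W : Set G) := by
  have : T1Space (G ⧸ K) := QuotientGroup.t1Space_iff.mpr hK
  have : Finite (W ⧸ K.subgroupOf W) := (Nat.card_ne_zero.mp h).2
  have hfin : ((↑) '' (W : Set G) : Set (G ⧸ K)).Finite := by
    refine (Set.finite_range (Quotient.map' W.subtype fun a b hab => ?_ :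
      W ⧸ K.subgroupOf W → G ⧸ K)).subset ?_
    · rw [QuotientGroup.leftRel_apply] at hab ⊢
      exact hab
    · rintro _ ⟨w, hw, rfl⟩
      exact ⟨QuotientGroup.mk (⟨w, hw⟩ : W), rfl⟩
  have hpre : (QuotientGroup.mk : G → G ⧸ K) ⁻¹' (QuotientGroup.mk '' (W : Set G)) = W := by
    refine subset_antisymm (fun x ⟨w, hw, hwx⟩ => ?_) (Set.subset_preimage_image _ _)
    simpa using W.mul_mem hw (hKW (QuotientGroup.eq.mp hwx))
  exact hpre ▸ hfin.isClosed.preimage QuotientGroup.continuous_mk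

theorem isClosed_normalCoreIn (C : Subgroup G) {H : Subgroup G} (hH : IsClosed (H : Set G)) :
    IsClosed (normalCoreIn C H : Set G) := by
  rw [normalCoreIn, coe_iInf]
  exact isClosed_iInter fun c => by
    rw [coe_pointwise_smul]
    exact hH.smul _

end Topology

end Subgroup

theorem DirectedOn.le_of_forall_ge_eq {α : Type*} [PartialOrder α] {s : Set α}
    (hs : DirectedOn (· ≤ ·) s) {m : α} (hm : m ∈ s) (hmax : ∀ x ∈ s, m ≤ x → x = m) {x : α}
    (hx : x ∈ s) : x ≤ m := by
  obtain ⟨z, hz, hxz, hmz⟩ := hs x hx m hm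
  exact hmax z hz hmz ▸ hxz

theorem IsOrbital.finiteIndex_normalizer {G : Type*} [Group G] [TopologicalSpace G]
    [IsTopologicalGroup G] [CompactSpace G] {H : Subgroup G} (hH : IsOrbital H) :
    (normalizer (H : Set G)).FiniteIndex :=
  have := quotient_finite_of_isOpen _ hH.2
  finiteIndex_of_finite_quotient

theorem orbital_finiteIndex_in_isolator_general {G : Type*} [Group G] [TopologicalSpace G]
    [IsTopologicalGroup G] [CompactSpace G]
    (hmax : MaxClosedSubgroups G)
    (H : Subgroup G) (hH : IsOrbital H) :
    H ≤ isolator H ∧ H.relIndex (isolator H) ≠ 0 := by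
  have := hH.finiteIndex_normalizer
  set K := normalCoreIn (Commensurable.commensurator H) H
  have hKH : K ≤ H := normalCoreIn_le
  have hKH_rel : K.relIndex H ≠ 0 := relIndex_normalCoreIn_ne_zero le_rfl
  have hK : Commensurable.commensurator K ≤ normalizer (K : Set G) := by
    rw [← Commensurable.eq ⟨relIndex_eq_one.mpr hKH ▸ one_ne_zero, hKH_rel⟩]
    exact le_normalizer_normalCoreIn _ _
  have hclosed : ∀ W ∈ finConjOvergroups K, IsClosed (W : Set G) := fun W hW =>
    isClosed_of_relIndex_ne_zero (isClosed_normalCoreIn _ hH.1) hW.1 hW.2.1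
  have hS : ∀ L ∈ {L : Subgroup G | IsOrbital L ∧ H ≤ L ∧ H.relIndex L ≠ 0},
      L ∈ finConjOvergroups K := fun L ⟨hL, hHL, hrel⟩ =>
    ⟨hKH.trans hHL, relIndex_ne_zero_trans hKH_rel hrel, hL.finiteIndex_normalizer⟩
  have hHS : H ∈ {L : Subgroup G | IsOrbital L ∧ H ≤ L ∧ H.relIndex L ≠ 0} :=
    ⟨hH, le_rfl, by simp⟩
  obtain ⟨M, hM, hMmax⟩ := hmax _ ⟨H, hS H hHS⟩ hclosed
  have hle : ∀ W ∈ finConjOvergroups K, W ≤ M := fun W hW =>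
    (directedOn_finConjOvergroups hK).le_of_forall_ge_eq hM hMmax hW
  have hisoM : isolator H ≤ M :=
    topologicalClosure_minimal _ (iSup₂_le fun L hL => hle L (hS L hL)) (hclosed M hM)
  have hHM : H.relIndex M ≠ 0 := fun h0 => hM.2.1 (relIndex_eq_zero_of_le_left hKH h0)
  exact ⟨(le_biSup id hHS).trans (le_topologicalClosure _),
    fun h0 => hHM (relIndex_eq_zero_of_le_right hisoM h0)⟩

/-- If `G` is a profinite group satisfying the maximum condition on closed subgroups and
`H` is an orbital closed subgroup, then `H` is contained in its isolator with finite
index (equivalently, `H` is open in `i_G(H)`). -/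
theorem orbital_finiteIndex_in_isolator {G : Type*} [Group G] [TopologicalSpace G]
    [IsTopologicalGroup G] [CompactSpace G] [T2Space G] [TotallyDisconnectedSpace G]
    (hmax : MaxClosedSubgroups G)
    (H : Subgroup G) (hH : IsOrbital H) :
    H ≤ isolator H ∧ H.relIndex (isolator H) ≠ 0 :=
  orbital_finiteIndex_in_isolator_general hmax H hH
end

section
/- Let G be a profinite group satisfying the maximum condition on closed subgroups, and let H be an orbital closed subgroup of G. Then the isolator i_G(H) is an isolated orbital closed subgroup of G containing H. Furthermore, if H is normal in G, then i_G(H) is normal in G. -/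
/-!
Call `L` a finite orbital extension of `H` if `L` is orbital and contains `H` with finite index.
By compactness, open normalizers have finite index. The heart of the proof is that two finite
orbital extensions `A`, `B` of `H` generate another one. The core `K` of `C = A ⊓ B` in `A ⊔ B`
has finite index in `C`, since the normalizer of `C` has finite index and so `C` has only finitely
many conjugates, all commensurable with `C`. Modulo `K`, the groups `A` and `B` become finite
subgroups normalized by a common subgroup of finite index. Such subgroups generate a finite group:
their centralizer has finite index, so the group they generate is centre-by-finite, its derived
subgroup is finite by Schur's theorem, and its abelianization is generated by two finite
subgroups. Hence `A ⊔ B` is a finite union of cosets of the closed subgroup `C`.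
With the maximum condition, the finite orbital extensions of `H` therefore have a greatest element
`M`, which is closed and hence equal to `i_G(H)`; maximality makes it isolated, and when `H` is
normal every conjugate of `M` is again such an extension, so `M` is normal.
-/

open Subgroup
open scoped Pointwise commutatorElement

section GroupTheory

variable {Γ : Type*} [Group Γ]

theorem Subgroup.pointwise_smul_iInf {α : Type*} [Group α] [MulDistribMulAction α Γ]
    {ι : Sort*} (a : α) (S : ι → Subgroup Γ) : a • ⨅ i, S i = ⨅ i, a • S i := by
  ext x
  simp only [mem_pointwise_smul_iff_inv_smul_mem, mem_iInf]

theorem Subgroup.inf_normalizer_le_normalizer_sup {A B : Subgroup Γ} :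
    normalizer (A : Set Γ) ⊓ normalizer (B : Set Γ) ≤
      normalizer ((A ⊔ B : Subgroup Γ) : Set Γ) :=
  fun g hg => by
    rw [← conjAct_pointwise_smul_iff, smul_sup, conjAct_pointwise_smul_eq_self hg.1,
      conjAct_pointwise_smul_eq_self hg.2]

theorem Subgroup.pointwise_smul_normalizer_le (g : ConjAct Γ) (A : Subgroup Γ) :
    g • normalizer (A : Set Γ) ≤ normalizer ((g • A : Subgroup Γ) : Set Γ) := by
  intro x hx
  rw [mem_pointwise_smul_iff_inv_smul_mem, ← conjAct_pointwise_smul_iff] at hx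
  rw [← conjAct_pointwise_smul_iff]
  have : ConjAct.toConjAct x = g * ConjAct.toConjAct (g⁻¹ • x) * g⁻¹ := by
    simp [ConjAct.smul_def, mul_assoc]
  rw [this, mul_smul, mul_smul, inv_smul_smul, hx]

theorem Subgroup.normal_of_forall_conjAct_smul_le {N : Subgroup Γ}
    (h : ∀ g : ConjAct Γ, g • N ≤ N) : N.Normal :=
  ⟨fun n hn g => by
    simpa [ConjAct.toConjAct_smul] using
      h _ (smul_mem_pointwise_smul n (ConjAct.toConjAct g) N hn)⟩

theorem Subgroup.map_subgroupOf_le_normalizer {Δ : Type*} [Group Δ] {A W P : Subgroup Γ}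
    (hAP : A ≤ P) (hW : W ≤ normalizer (A : Set Γ)) (f : P →* Δ) :
    (W.subgroupOf P).map f ≤ normalizer ((A.subgroupOf P).map f : Set Δ) :=
  (map_mono ((subgroupOf_mono P hW).trans (subgroupOf_normalizer_eq hAP).le)).trans
    (le_normalizer_map f)

theorem Subgroup.relIndex_eq_card_map_mk' (N H : Subgroup Γ) [N.Normal] :
    N.relIndex H = Nat.card (H.map (QuotientGroup.mk' N)) := by
  rw [← relIndex_bot_left, ← relIndex_comap, MonoidHom.comap_bot, QuotientGroup.ker_mk']

theorem Subgroup.relIndex_centralizer_ne_zero {A W : Subgroup Γ} [Finite A]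
    (hW : W ≤ normalizer (A : Set Γ)) : (centralizer (A : Set Γ)).relIndex W ≠ 0 := by
  have : ((centralizer (A : Set Γ)).subgroupOf (normalizer (A : Set Γ))).FiniteIndex := by
    rw [← normalizerMonoidHom_ker]
    infer_instance
  exact fun h => FiniteIndex.index_ne_zero (relIndex_eq_zero_of_le_right hW h)

theorem commutatorElement_mul_mem_center {z w : Γ} (hz : z ∈ center Γ) (hw : w ∈ center Γ)
    (a b : Γ) : ⁅a * z, b * w⁆ = ⁅a, b⁆ := by
  have left : ∀ c ∈ center Γ, ∀ x y : Γ, ⁅x * c, y⁆ = ⁅x, y⁆ := fun c hc x y => by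
    have hcy : c * y * c⁻¹ = y := by rw [← mem_center_iff.mp hc y]; group
    calc ⁅x * c, y⁆ = x * (c * y * c⁻¹) * x⁻¹ * y⁻¹ := by group
      _ = ⁅x, y⁆ := by rw [hcy, commutatorElement_def]
  rw [left z hz, ← commutatorElement_inv, left w hw, commutatorElement_inv]

theorem finite_commutatorSet_of_finiteIndex_center [(center Γ).FiniteIndex] :
    Finite (commutatorSet Γ) := by
  refine Set.Finite.subset (Set.finite_range fun p : (Γ ⧸ center Γ) × (Γ ⧸ center Γ) =>
    ⁅p.1.out, p.2.out⁆) ?_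
  rintro _ ⟨a, b, rfl⟩
  obtain ⟨z, hz⟩ := QuotientGroup.mk_out_eq_mul (center Γ) a
  obtain ⟨w, hw⟩ := QuotientGroup.mk_out_eq_mul (center Γ) b
  exact ⟨(a, b), by simp only [hz, hw, commutatorElement_mul_mem_center z.2 w.2]⟩

theorem finite_of_sup_eq_top [(center Γ).FiniteIndex] {A B : Subgroup Γ} [Finite A] [Finite B]
    (hAB : A ⊔ B = ⊤) : Finite Γ := by
  have := finite_commutatorSet_of_finiteIndex_center (Γ := Γ)
  let φ : Γ →* Abelianization Γ := Abelianization.of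
  have hker : Finite φ.ker := by
    rw [Abelianization.ker_of]
    -- Schur's theorem: finitely many commutators generate a finite subgroup
    infer_instance
  have hrange : Finite φ.range := by
    rw [MonoidHom.range_eq_map, ← hAB, Subgroup.map_sup, ← SetLike.coe_sort_coe, mul_normal,
      coe_map, coe_map]
    exact (((A : Set Γ).toFinite.image φ).mul ((B : Set Γ).toFinite.image φ)).to_subtype
  exact φ.finite_iff_finite_ker_range.mpr ⟨hker, hrange⟩

theorem Subgroup.finite_sup_of_le_normalizer {A B W : Subgroup Γ} [Finite A] [Finite B]
    [W.FiniteIndex] (hA : W ≤ normalizer (A : Set Γ)) (hB : W ≤ normalizer (B : Set Γ)) :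
    Finite ↥(A ⊔ B) := by
  set Z := centralizer (A : Set Γ) ⊓ centralizer B
  have hZW : Z.relIndex W ≠ 0 :=
    relIndex_inf_ne_zero (relIndex_centralizer_ne_zero hA) (relIndex_centralizer_ne_zero hB)
  have : Z.FiniteIndex := ⟨by
    rw [← relIndex_top_right]
    exact relIndex_ne_zero_trans hZW
      (by rw [relIndex_top_right]; exact FiniteIndex.index_ne_zero)⟩
  have hZ : Z.subgroupOf (A ⊔ B) ≤ center ↥(A ⊔ B) := by
    have : A ⊔ B ≤ centralizer (Z : Set Γ) :=
      sup_le (le_centralizer_iff.mp inf_le_left) (le_centralizer_iff.mp inf_le_right)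
    exact fun z hz => mem_center_iff.mpr fun r =>
      Subtype.ext (mem_centralizer_iff.mp (this r.2) z (mem_subgroupOf.mp hz)).symm
  have : (center ↥(A ⊔ B)).FiniteIndex := finiteIndex_of_le hZ
  have : Finite (A.subgroupOf (A ⊔ B)) :=
    Finite.of_equiv _ (subgroupOfEquivOfLe le_sup_left).symm.toEquiv
  have : Finite (B.subgroupOf (A ⊔ B)) :=
    Finite.of_equiv _ (subgroupOfEquivOfLe le_sup_right).symm.toEquiv
  exact finite_of_sup_eq_top (A := A.subgroupOf (A ⊔ B)) (B := B.subgroupOf (A ⊔ B))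
    (by rw [← subgroupOf_sup le_sup_left le_sup_right, subgroupOf_self])

theorem Subgroup.relIndex_sup_ne_zero_of_le_normalizer {K A B W : Subgroup Γ} [W.FiniteIndex]
    (hK : A ⊔ B ≤ normalizer (K : Set Γ)) (hWA : W ≤ normalizer (A : Set Γ))
    (hWB : W ≤ normalizer (B : Set Γ)) (hA : K.relIndex A ≠ 0) (hB : K.relIndex B ≠ 0) :
    K.relIndex (A ⊔ B) ≠ 0 := by
  set P := normalizer (K : Set Γ)
  have hAP : A ≤ P := le_sup_left.trans hK
  have hBP : B ≤ P := le_sup_right.trans hK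
  let π := QuotientGroup.mk' (K.subgroupOf P)
  have hcard {L : Subgroup Γ} (hLP : L ≤ P) :
      K.relIndex L = Nat.card ((L.subgroupOf P).map π) := by
    rw [← relIndex_eq_card_map_mk', relIndex_subgroupOf hLP]
  have : Finite ((A.subgroupOf P).map π) := Nat.finite_of_card_ne_zero (hcard hAP ▸ hA)
  have : Finite ((B.subgroupOf P).map π) := Nat.finite_of_card_ne_zero (hcard hBP ▸ hB)
  have : ((W.subgroupOf P).map π).FiniteIndex :=
    ⟨fun h => FiniteIndex.index_ne_zero (Nat.eq_zero_of_zero_dvd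
      (h ▸ index_map_dvd _ (QuotientGroup.mk'_surjective _)))⟩
  have hfin := finite_sup_of_le_normalizer (map_subgroupOf_le_normalizer hAP hWA π)
    (map_subgroupOf_le_normalizer hBP hWB π)
  rw [← Subgroup.map_sup, ← subgroupOf_sup hAP hBP] at hfin
  rw [hcard hK]
  exact Nat.card_pos.ne'

theorem Subgroup.le_commensurator_of_le {C A : Subgroup Γ} (hCA : C ≤ A)
    (h : C.relIndex A ≠ 0) :
    A ≤ Commensurable.commensurator C := by
  have hC : Commensurable C A := ⟨h, by rw [relIndex_eq_one.mpr hCA]; exact one_ne_zero⟩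
  rw [Commensurable.eq hC]
  intro a ha
  rw [Commensurable.commensurator_mem_iff, conjAct_pointwise_smul_eq_self (le_normalizer ha)]

theorem Subgroup.exists_relIndex_ne_zero_le_normalizer_of_le_commensurator {C D : Subgroup Γ}
    [(normalizer (C : Set Γ)).FiniteIndex] (hD : D ≤ Commensurable.commensurator C) :
    ∃ K ≤ C, K.relIndex C ≠ 0 ∧ D ≤ normalizer (K : Set Γ) := by
  let f : D → Subgroup Γ := fun d => ConjAct.toConjAct (d : Γ) • C
  have hfin : (Set.range f).Finite := by
    refine (Set.finite_range fun q : Γ ⧸ normalizer (C : Set Γ) =>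
      ConjAct.toConjAct q.out • C).subset ?_
    rintro _ ⟨d, rfl⟩
    obtain ⟨n, hn⟩ := QuotientGroup.mk_out_eq_mul (normalizer (C : Set Γ)) (d : Γ)
    refine ⟨d, ?_⟩
    simp only [f, hn, map_mul, mul_smul, conjAct_pointwise_smul_eq_self n.2]
  have : Finite (Set.range f) := hfin.to_subtype
  refine ⟨⨅ d, f d, iInf_le_of_le 1 (by simp [f]), ?_, fun d hd => ?_⟩
  · rw [← sInf_range, sInf_eq_iInf']
    exact relIndex_iInf_ne_zero fun ⟨_, d, rfl⟩ => (hD d.2).1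
  · rw [← conjAct_pointwise_smul_iff, pointwise_smul_iInf,
      ← (Equiv.mulLeft (⟨d, hd⟩ : D)).iInf_comp (g := f)]
    simp [f, mul_smul]

theorem Subgroup.relIndex_sup_ne_zero {C A B : Subgroup Γ}
    [(normalizer (C : Set Γ)).FiniteIndex] [(normalizer (A : Set Γ)).FiniteIndex]
    [(normalizer (B : Set Γ)).FiniteIndex] (hCA : C ≤ A) (hCB : C ≤ B)
    (hA : C.relIndex A ≠ 0) (hB : C.relIndex B ≠ 0) : C.relIndex (A ⊔ B) ≠ 0 := by
  obtain ⟨K, hKC, hK, hN⟩ := exists_relIndex_ne_zero_le_normalizer_of_le_commensurator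
    (sup_le (le_commensurator_of_le hCA hA) (le_commensurator_of_le hCB hB))
  have hKAB := relIndex_sup_ne_zero_of_le_normalizer hN
    (inf_le_left : _ ≤ normalizer (A : Set Γ)) (inf_le_right : _ ≤ normalizer (B : Set Γ))
    (relIndex_ne_zero_trans hK hA) (relIndex_ne_zero_trans hK hB)
  exact mt (relIndex_eq_zero_of_le_left hKC) hKAB

end GroupTheory

section Topology

variable {G : Type*} [Group G] [TopologicalSpace G]

def IsFiniteOrbitalOver (H L : Subgroup G) : Prop :=
  IsOrbital L ∧ H ≤ L ∧ H.relIndex L ≠ 0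

namespace IsFiniteOrbitalOver

variable {H L M : Subgroup G}

theorem refl (hH : IsOrbital H) : IsFiniteOrbitalOver H H :=
  ⟨hH, le_rfl, by simp⟩

theorem trans (hM : IsFiniteOrbitalOver H M) (hL : IsFiniteOrbitalOver M L) :
    IsFiniteOrbitalOver H L :=
  ⟨hL.1, hM.2.1.trans hL.2.1, relIndex_ne_zero_trans hM.2.2 hL.2.2⟩

end IsFiniteOrbitalOver

variable [IsTopologicalGroup G]

theorem Subgroup.finiteIndex_of_isOpen [CompactSpace G] {U : Subgroup G}
    (h : IsOpen (U : Set G)) : U.FiniteIndex :=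
  have := U.quotient_finite_of_isOpen h
  finiteIndex_of_finite_quotient

theorem Subgroup.isClosed_of_le_of_relIndex_ne_zero {K D : Subgroup G} (hKD : K ≤ D)
    (hK : IsClosed (K : Set G)) (h : K.relIndex D ≠ 0) : IsClosed (D : Set G) := by
  have : (K.subgroupOf D).FiniteIndex := ⟨h⟩
  have hD : (D : Set G) = ⋃ q : D ⧸ K.subgroupOf D, ((q.out : D) : G) • (K : Set G) := by
    refine subset_antisymm (fun x hx => ?_) (Set.iUnion_subset fun q => ?_)
    · refine Set.mem_iUnion.mpr ⟨QuotientGroup.mk ⟨x, hx⟩, ?_⟩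
      rw [Set.mem_smul_set_iff_inv_smul_mem, smul_eq_mul]
      exact mem_subgroupOf.mp (QuotientGroup.eq.mp
        (QuotientGroup.out_eq' (QuotientGroup.mk ⟨x, hx⟩ : D ⧸ K.subgroupOf D)))
    · rintro _ ⟨k, hk, rfl⟩
      exact D.mul_mem q.out.2 (hKD hk)
  rw [hD]
  exact isClosed_iUnion_of_finite fun q => hK.smul _

theorem IsOrbital.inf {A B : Subgroup G} (hA : IsOrbital A) (hB : IsOrbital B) :
    IsOrbital (A ⊓ B) :=
  ⟨hA.1.inter hB.1, isOpen_mono inf_normalizer_le_normalizer_inf (hA.2.inter hB.2)⟩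

theorem IsOrbital.conjAct_smul {A : Subgroup G} (hA : IsOrbital A) (g : ConjAct G) :
    IsOrbital (g • A) :=
  ⟨by rw [coe_pointwise_smul]; exact hA.1.smul g,
    isOpen_mono (pointwise_smul_normalizer_le g A)
      (by rw [coe_pointwise_smul]; exact hA.2.smul g)⟩

theorem IsFiniteOrbitalOver.conjAct_smul {H L : Subgroup G} (hL : IsFiniteOrbitalOver H L)
    (g : ConjAct G) : IsFiniteOrbitalOver (g • H) (g • L) :=
  ⟨hL.1.conjAct_smul g, pointwise_smul_le_pointwise_smul_iff.mpr hL.2.1,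
    by rw [relIndex_pointwise_smul]; exact hL.2.2⟩

theorem IsFiniteOrbitalOver.sup [CompactSpace G] {H A B : Subgroup G}
    (hA : IsFiniteOrbitalOver H A) (hB : IsFiniteOrbitalOver H B) :
    IsFiniteOrbitalOver H (A ⊔ B) := by
  have hC := hA.1.inf hB.1
  have hHC : H ≤ A ⊓ B := le_inf hA.2.1 hB.2.1
  have := finiteIndex_of_isOpen hA.1.2
  have := finiteIndex_of_isOpen hB.1.2
  have := finiteIndex_of_isOpen hC.2
  have hCAB := relIndex_sup_ne_zero inf_le_left inf_le_right
    (mt (relIndex_eq_zero_of_le_left hHC) hA.2.2) (mt (relIndex_eq_zero_of_le_left hHC) hB.2.2)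
  refine ⟨⟨isClosed_of_le_of_relIndex_ne_zero (inf_le_left.trans le_sup_left) hC.1 hCAB,
    isOpen_mono inf_normalizer_le_normalizer_sup (hA.1.2.inter hB.1.2)⟩,
    hA.2.1.trans le_sup_left, relIndex_ne_zero_trans ?_ hCAB⟩
  exact mt (relIndex_eq_zero_of_le_right inf_le_left) hA.2.2

theorem exists_greatest_isFiniteOrbitalOver [CompactSpace G] (hmax : MaxClosedSubgroups G)
    {H : Subgroup G} (hH : IsOrbital H) :
    ∃ M, IsFiniteOrbitalOver H M ∧ ∀ L, IsFiniteOrbitalOver H L → L ≤ M := by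
  obtain ⟨M, hM, hMmax⟩ :=
    hmax {L | IsFiniteOrbitalOver H L} ⟨H, .refl hH⟩ fun L hL => hL.1.1
  exact ⟨M, hM, fun L hL => hMmax _ (hM.sup hL) le_sup_left ▸ le_sup_right⟩

theorem isolator_eq_of_greatest {H M : Subgroup G} (hM : IsFiniteOrbitalOver H M)
    (hle : ∀ L, IsFiniteOrbitalOver H L → L ≤ M) : isolator H = M := by
  have hsup : ⨆ L ∈ {L | IsFiniteOrbitalOver H L}, L = M :=
    le_antisymm (iSup₂_le hle) (le_iSup₂_of_le M hM le_rfl)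
  change (⨆ L ∈ {L | IsFiniteOrbitalOver H L}, L).topologicalClosure = M
  rw [hsup]
  exact SetLike.coe_injective hM.1.1.closure_eq

end Topology

theorem isolator_isIsolatedOrbital_general {G : Type*} [Group G] [TopologicalSpace G]
    [IsTopologicalGroup G] [CompactSpace G]
    (hmax : MaxClosedSubgroups G)
    (H : Subgroup G) (hH : IsOrbital H) :
    H ≤ isolator H ∧ IsIsolatedOrbital (isolator H) ∧
      (H.Normal → (isolator H).Normal) := by
  obtain ⟨M, hM, hle⟩ := exists_greatest_isFiniteOrbitalOver hmax hH
  rw [isolator_eq_of_greatest hM hle]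
  refine ⟨hM.2.1, ⟨hM.1, fun L hL hML => ?_⟩, fun hN => ?_⟩
  · by_contra hfin
    exact hML.not_ge (hle L (hM.trans ⟨hL, hML.le, hfin⟩))
  · exact normal_of_forall_conjAct_smul_le fun g => hle _ (hN.conjAct g ▸ hM.conjAct_smul g)

/-- If `G` is a profinite group satisfying the maximum condition on closed subgroups and
`H` is an orbital closed subgroup, then `i_G(H)` is an isolated orbital closed subgroup
of `G` containing `H`; moreover if `H` is normal in `G` then so is `i_G(H)`. -/
theorem isolator_isIsolatedOrbital {G : Type*} [Group G] [TopologicalSpace G]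
    [IsTopologicalGroup G] [CompactSpace G] [T2Space G] [TotallyDisconnectedSpace G]
    (hmax : MaxClosedSubgroups G)
    (H : Subgroup G) (hH : IsOrbital H) :
    H ≤ isolator H ∧ IsIsolatedOrbital (isolator H) ∧
      (H.Normal → (isolator H).Normal) :=
  isolator_isIsolatedOrbital_general hmax H hH
end

section
/- Let G be a profinite group satisfying the maximum condition on closed subgroups. If G is orbitally sound and H is a closed subgroup of G of finite index, then H is orbitally sound; that is, every closed subgroup of H that is isolated orbital as a subgroup of H is normal in H. -/
/-!
Let `K` be isolated orbital in `H`. Since `H` is open in `G`, `K` is also orbital in `G`, and by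
the maximum condition it lies with finite index in an isolated orbital subgroup `M` of `G`,
which is normal because `G` is orbitally sound. Then `M ∩ H` is a normal closed subgroup of `H`
containing `K` with finite index, so isolation of `K` in `H` forces `K = M ∩ H`.
-/

section Orbital

variable {G : Type*} [Group G] [TopologicalSpace G]

theorem isOrbital_of_normal {M : Subgroup G} (hM : IsClosed (M : Set G)) [M.Normal] :
    IsOrbital M := by
  refine ⟨hM, ?_⟩
  rw [Subgroup.normalizer_eq_top_iff.mpr ‹_›, Subgroup.coe_top]
  exact isOpen_univ

theorem IsOrbital.map_subtype [SeparatelyContinuousMul G] {H : Subgroup G}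
    (hH : IsOpen (H : Set G)) {K : Subgroup H} (hK : IsOrbital K) :
    IsOrbital (K.map H.subtype) := by
  obtain ⟨hKcl, hKnorm⟩ := hK
  refine ⟨(H.isClosed_of_isOpen hH).isClosedEmbedding_subtypeVal.isClosedMap _ hKcl, ?_⟩
  exact Subgroup.isOpen_mono (Subgroup.le_normalizer_map H.subtype)
    (hH.isOpenMap_subtype_val _ hKnorm)

theorem IsIsolatedOrbital.eq_of_le {K L : Subgroup G} (hK : IsIsolatedOrbital K)
    (hL : IsOrbital L) (hKL : K ≤ L) (hidx : K.relIndex L ≠ 0) : L = K := by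
  by_contra hne
  exact hidx (hK.2 L hL (lt_of_le_of_ne hKL (Ne.symm hne)))

theorem MaxClosedSubgroups.exists_isIsolatedOrbital_le (hmax : MaxClosedSubgroups G)
    {K : Subgroup G} (hK : IsOrbital K) :
    ∃ M, IsIsolatedOrbital M ∧ K ≤ M ∧ K.relIndex M ≠ 0 := by
  obtain ⟨M, ⟨hMorb, hKM, hKMidx⟩, hMmax⟩ :=
    hmax {L | IsOrbital L ∧ K ≤ L ∧ K.relIndex L ≠ 0}
      ⟨K, hK, le_rfl, by simp [Subgroup.relIndex_self]⟩ (fun L hL ↦ hL.1.1)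
  refine ⟨M, ⟨hMorb, fun L hL hML ↦ ?_⟩, hKM, hKMidx⟩
  by_contra hMLidx
  have hKLidx : K.relIndex L ≠ 0 := by
    rw [← Subgroup.relIndex_mul_relIndex K M L hKM hML.le]
    exact mul_ne_zero hKMidx hMLidx
  exact hML.ne' (hMmax L ⟨hL, hKM.trans hML.le, hKLidx⟩ hML.le)

end Orbital

theorem orbitallySound_of_finiteIndex_general {G : Type*} [Group G] [TopologicalSpace G]
    [IsTopologicalGroup G]
    (hmax : MaxClosedSubgroups G) (hG : OrbitallySound G)
    (H : Subgroup G) (hHcl : IsClosed (H : Set G)) (hHidx : H.index ≠ 0) :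
    OrbitallySound H := by
  intro K hK
  have : H.FiniteIndex := ⟨hHidx⟩
  have hHopen : IsOpen (H : Set G) := H.isOpen_of_isClosed_of_finiteIndex hHcl
  obtain ⟨M, hMiso, hKM, hKMidx⟩ :=
    hmax.exists_isIsolatedOrbital_le (hK.1.map_subtype hHopen)
  have : M.Normal := hG M hMiso
  have hKN : K ≤ M.comap H.subtype := Subgroup.map_le_iff_le_comap.mp hKM
  have hKNidx : K.relIndex (M.comap H.subtype) ≠ 0 := by
    rw [← Subgroup.comap_map_eq_self_of_injective H.subtype_injective K]
    exact Subgroup.relIndex_comap_ne_zero _ hKMidx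
  have hNorb : IsOrbital (M.comap H.subtype) :=
    isOrbital_of_normal (hMiso.1.1.preimage continuous_subtype_val)
  rw [← hK.eq_of_le hNorb hKN hKNidx]
  infer_instance

/-- If `G` is an orbitally sound profinite group satisfying the maximum condition on
closed subgroups, and `H` is a closed subgroup of finite index, then `H` (with its
subspace topology) is orbitally sound. -/
theorem orbitallySound_of_finiteIndex {G : Type*} [Group G] [TopologicalSpace G]
    [IsTopologicalGroup G] [CompactSpace G] [T2Space G] [TotallyDisconnectedSpace G]
    (hmax : MaxClosedSubgroups G) (hG : OrbitallySound G)
    (H : Subgroup G) (hHcl : IsClosed (H : Set G)) (hHidx : H.index ≠ 0) :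
    OrbitallySound H :=
  orbitallySound_of_finiteIndex_general hmax hG H hHcl hHidx
end

section
/- Let p be a prime and A a free ℤ_p-module of finite rank. Let φ : A → A be a ℤ_p-linear automorphism of finite order (φ^m = id for some m ≥ 1) with the property that every ℤ_p-submodule K of A contains a ℤ_p-submodule K' with φ(K') = K' and K/K' finite. Then there exists a unit ζ ∈ ℤ_p^× of finite order (a torsion unit, so ζ^(p−1) = 1 if p > 2, and ζ = ±1 if p = 2) such that φ(x) = ζ·x for all x ∈ A. -/
/-!
For `x ≠ 0`, the invariant submodule of finite index in `ℤ_p ∙ x` is nonzero, so it contains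
some `c • x` with `c ≠ 0`, and then `c • φ x = d • x` for some `d`. Iterating `m` times gives
`c ^ m = d ^ m`; as `ℤ_p` is integrally closed, `d = c * u` for a unit `u` with `u ^ m = 1`, so
every vector is an eigenvector for a torsion unit. An endomorphism of a torsion-free module for
which every vector is an eigenvector is a scalar.
-/

open Module

theorem exists_unit_pow_eq_one_of_pow_eq_pow {R : Type*} [CommRing R] [IsDomain R]
    [IsIntegrallyClosed R] {m : ℕ} (hm : m ≠ 0) {c d : R} (hc : c ≠ 0) (h : c ^ m = d ^ m) :
    ∃ u : Rˣ, u ^ m = 1 ∧ d = c * u := by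
  obtain ⟨u, hu⟩ := (Associated.pow_iff hm).mp (by rw [h] : Associated (c ^ m) (d ^ m))
  refine ⟨u, Units.ext (mul_left_cancel₀ (pow_ne_zero m hc) ?_), hu.symm⟩
  rw [Units.val_pow_eq_pow_val, ← mul_pow, hu, ← h, Units.val_one, mul_one]

section

variable {R M : Type*} [Ring R] [AddCommGroup M] [Module R M]

theorem Submodule.ne_bot_of_finite_quotient_comap {K K' : Submodule R M} [Infinite K]
    [Finite (K ⧸ K'.comap K.subtype)] : K' ≠ ⊥ := by
  intro h
  have : Finite K := .of_equiv _ (Submodule.quotEquivOfEqBot (K'.comap K.subtype)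
    (by rw [h, Submodule.comap_bot, Submodule.ker_subtype])).toEquiv
  exact not_finite K

theorem exists_smul_apply_eq_smul_of_map_le (f : Module.End R M) {x : M} {K : Submodule R M}
    (hK : K ≤ R ∙ x) (hf : K.map f ≤ K) (hK0 : K ≠ ⊥) :
    ∃ c d : R, c ≠ 0 ∧ c • f x = d • x := by
  obtain ⟨y, hy, hy0⟩ := Submodule.exists_mem_ne_zero_of_ne_bot hK0
  obtain ⟨c, rfl⟩ := Submodule.mem_span_singleton.mp (hK hy)
  obtain ⟨d, hd⟩ := Submodule.mem_span_singleton.mp (hK (hf (Submodule.mem_map_of_mem hy)))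
  exact ⟨c, d, left_ne_zero_of_smul hy0, by rw [← map_smul, hd]⟩

end

section

variable {R M : Type*} [CommRing R] [AddCommGroup M] [Module R M]

theorem pow_smul_pow_apply_of_smul_apply_eq_smul (f : Module.End R M) {c d : R} {x : M}
    (h : c • f x = d • x) (j : ℕ) : c ^ j • (f ^ j) x = d ^ j • x := by
  induction j with
  | zero => simp
  | succ j ih =>
    calc c ^ (j + 1) • (f ^ (j + 1)) x = c • f (c ^ j • (f ^ j) x) := by
          rw [pow_succ' f, Module.End.mul_apply, map_smul, smul_smul, pow_succ']
      _ = d ^ (j + 1) • x := by rw [ih, map_smul, smul_comm, h, smul_smul, pow_succ]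

variable [IsDomain R] [IsTorsionFree R M]

theorem exists_unit_apply_eq_smul_of_smul_apply_eq_smul [IsIntegrallyClosed R]
    (f : Module.End R M) {m : ℕ} (hm : m ≠ 0) (hf : f ^ m = 1) {c d : R} (hc : c ≠ 0)
    {x : M} (hx : x ≠ 0) (h : c • f x = d • x) : ∃ u : Rˣ, u ^ m = 1 ∧ f x = (u : R) • x := by
  have hcd : c ^ m = d ^ m := smul_left_injective R hx <| by
    simpa [hf] using pow_smul_pow_apply_of_smul_apply_eq_smul f h m
  obtain ⟨u, hum, rfl⟩ := exists_unit_pow_eq_one_of_pow_eq_pow hm hc hcd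
  refine ⟨u, hum, smul_right_injective M hc ?_⟩
  show c • f x = c • ((u : R) • x)
  rwa [← mul_smul]

theorem exists_unit_apply_eq_smul_of_finite_quotient [Infinite R] [IsIntegrallyClosed R]
    (f : Module.End R M) {m : ℕ} (hm : m ≠ 0) (hf : f ^ m = 1) {x : M} (hx : x ≠ 0)
    {K : Submodule R M} (hK : K ≤ R ∙ x) (hfK : K.map f ≤ K)
    (hfin : Finite ((R ∙ x) ⧸ K.comap (R ∙ x).subtype)) :
    ∃ u : Rˣ, u ^ m = 1 ∧ f x = (u : R) • x := by
  have : Infinite (R ∙ x) :=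
    (LinearEquiv.toSpanNonzeroSingleton R M x hx).toEquiv.infinite_iff.mp ‹_›
  obtain ⟨c, d, hc, h⟩ := exists_smul_apply_eq_smul_of_map_le f hK hfK
    (Submodule.ne_bot_of_finite_quotient_comap (K := R ∙ x))
  exact exists_unit_apply_eq_smul_of_smul_apply_eq_smul f hm hf hc hx h

theorem eq_smul_of_forall_exists_smul (f : Module.End R M) (hf : ∀ x, ∃ b : R, f x = b • x)
    {a : R} {x₀ : M} (hx₀ : x₀ ≠ 0) (ha : f x₀ = a • x₀) (x : M) : f x = a • x := by
  obtain ⟨b, hb⟩ := hf x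
  obtain ⟨c, hc⟩ := hf (x + x₀)
  have hdep : (c - b) • x = (a - c) • x₀ := by
    rw [map_add, hb, ha] at hc
    linear_combination (norm := module) -hc
  have hcancel : (c - b) • (b • x - a • x) = 0 := by
    have := congrArg f hdep
    rw [map_smul, map_smul, hb, ha] at this
    linear_combination (norm := module) this - a • hdep
  rcases eq_or_ne c b with rfl | hcb
  · rw [sub_self, zero_smul, eq_comm, smul_eq_zero_iff_left hx₀, sub_eq_zero] at hdep
    rw [hb, hdep]
  · rwa [smul_eq_zero_iff_right (sub_ne_zero.mpr hcb), sub_eq_zero, ← hb] at hcancel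

end

theorem finite_order_orbitally_sound_action_is_scalar_general (p : ℕ) [Fact p.Prime]
    {A : Type*} [AddCommGroup A] [Module ℤ_[p] A]
    [Module.Free ℤ_[p] A]
    (φ : A ≃ₗ[ℤ_[p]] A) (m : ℕ) (hm : 1 ≤ m) (hord : φ ^ m = 1)
    (horb : ∀ K : Submodule ℤ_[p] A, ∃ K' : Submodule ℤ_[p] A, K' ≤ K ∧
      K'.map (φ : A →ₗ[ℤ_[p]] A) = K' ∧ Finite (K ⧸ K'.comap K.subtype)) :
    ∃ ζ : ℤ_[p]ˣ, IsOfFinOrder ζ ∧ ∀ x : A, φ x = (ζ : ℤ_[p]) • x := by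
  have hord' : (φ : Module.End ℤ_[p] A) ^ m = 1 := by
    ext x; rw [Module.End.pow_apply, LinearEquiv.coe_coe, ← LinearEquiv.pow_apply, hord]; rfl
  have heigen (x : A) (hx : x ≠ 0) : ∃ ζ : ℤ_[p]ˣ, ζ ^ m = 1 ∧ φ x = (ζ : ℤ_[p]) • x := by
    obtain ⟨K, hK, hφK, hfin⟩ := horb (ℤ_[p] ∙ x)
    exact exists_unit_apply_eq_smul_of_finite_quotient _ (by omega) hord' hx hK hφK.le hfin
  rcases subsingleton_or_nontrivial A with hA | hA
  · exact ⟨1, IsOfFinOrder.one, fun x => Subsingleton.elim _ _⟩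
  obtain ⟨x₀, hx₀⟩ := exists_ne (0 : A)
  obtain ⟨ζ, hζm, hζ⟩ := heigen x₀ hx₀
  refine ⟨ζ, isOfFinOrder_iff_pow_eq_one.mpr ⟨m, hm, hζm⟩,
    eq_smul_of_forall_exists_smul (φ : Module.End ℤ_[p] A) (fun x => ?_) hx₀ hζ⟩
  rcases eq_or_ne x 0 with rfl | hx
  · exact ⟨0, by simp⟩
  · obtain ⟨ζ', -, hζ'⟩ := heigen x hx
    exact ⟨ζ', hζ'⟩

/-- Let `A` be a free `ℤ_p`-module of finite rank and `φ` a `ℤ_p`-linear automorphism of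
finite order such that every submodule `K` of `A` contains a `φ`-invariant submodule `K'`
with `K/K'` finite. Then `φ` is multiplication by a torsion unit `ζ ∈ ℤ_p^×`. -/
theorem finite_order_orbitally_sound_action_is_scalar (p : ℕ) [Fact p.Prime]
    {A : Type*} [AddCommGroup A] [Module ℤ_[p] A]
    [Module.Free ℤ_[p] A] [Module.Finite ℤ_[p] A]
    (φ : A ≃ₗ[ℤ_[p]] A) (m : ℕ) (hm : 1 ≤ m) (hord : φ ^ m = 1)
    (horb : ∀ K : Submodule ℤ_[p] A, ∃ K' : Submodule ℤ_[p] A, K' ≤ K ∧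
      K'.map (φ : A →ₗ[ℤ_[p]] A) = K' ∧ Finite (K ⧸ K'.comap K.subtype)) :
    ∃ ζ : ℤ_[p]ˣ, IsOfFinOrder ζ ∧ ∀ x : A, φ x = (ζ : ℤ_[p]) • x :=
  finite_order_orbitally_sound_action_is_scalar_general p φ m hm hord horb
end
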